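/- Three-dimensional ground state of the cyclic sawtooth chain: The configuration s : {1,…,12} → ℝ³ given by s_1 = (−1/2, 1/(2√3), √(2/3)), s_2 = (1, 0, 0), s_3 = (−1/2, −1/(2√3), −√(2/3)), s_4 = (1/2, √3/2, 0), s_5 = (0, −1/√3, √(2/3)), s_6 = (−1/2, √3/2, 0), s_7 = (1/2, −1/(2√3), −√(2/3)), s_8 = (−1, 0, 0), s_9 = (1/2, 1/(2√3), √(2/3)), s_10 = (−1/2, −√3/2, 0), s_11 = (0, 1/√3, −√(2/3)), s_12 = (1/2, −√3/2, 0) consists of unit vectors, spans all of ℝ³, and has energy H(s) = 2 Σ_{j=0}^{5} (s_{2j+1}·s_{2j+2} + s_{2j+2}·s_{2j+3} + s_{2j+1}·s_{2j+3}) = −18 (indices modulo 12), i.e. it is a three-dimensional ground state of the cyclic sawtooth chain. -/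

import Mathlib

/-- Heisenberg energy of the cyclic sawtooth chain with `J₁ = J₂ = J₃ = 1`:
twice the sum over the six triangles `{2j+1, 2j+2, 2j+3}` (indices mod 12)
of the three edge dot products. -/
noncomputable def sawtoothEnergy (s : ZMod 12 → Fin 3 → ℝ) : ℝ :=
  2 * ∑ j : Fin 6,
    ((∑ k, s ((2 * (j : ℕ) + 1 : ℕ) : ZMod 12) k * s ((2 * (j : ℕ) + 2 : ℕ) : ZMod 12) k)
      + (∑ k, s ((2 * (j : ℕ) + 2 : ℕ) : ZMod 12) k * s ((2 * (j : ℕ) + 3 : ℕ) : ZMod 12) k)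
      + (∑ k, s ((2 * (j : ℕ) + 1 : ℕ) : ZMod 12) k * s ((2 * (j : ℕ) + 3 : ℕ) : ZMod 12) k))

/-- The table `(s₁₂, s₁, s₂, …, s₁₁)` of the twelve spin vectors of the
three-dimensional ground state, indexed so that entry `k` is the spin of site
`μ` with `μ ≡ k (mod 12)`. -/
noncomputable def sawtooth3DTable : Fin 12 → Fin 3 → ℝ :=
  ![![1/2, -(Real.sqrt 3) / 2, 0],                                  -- s₁₂
    ![-1/2, 1 / (2 * Real.sqrt 3), Real.sqrt (2/3)],                -- s₁
    ![1, 0, 0],                                                     -- s₂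
    ![-1/2, -(1 / (2 * Real.sqrt 3)), -Real.sqrt (2/3)],            -- s₃
    ![1/2, Real.sqrt 3 / 2, 0],                                     -- s₄
    ![0, -(1 / Real.sqrt 3), Real.sqrt (2/3)],                      -- s₅
    ![-1/2, Real.sqrt 3 / 2, 0],                                    -- s₆
    ![1/2, -(1 / (2 * Real.sqrt 3)), -Real.sqrt (2/3)],             -- s₇
    ![-1, 0, 0],                                                    -- s₈
    ![1/2, 1 / (2 * Real.sqrt 3), Real.sqrt (2/3)],                 -- s₉
    ![-1/2, -(Real.sqrt 3) / 2, 0],                                 -- s₁₀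
    ![0, 1 / Real.sqrt 3, -Real.sqrt (2/3)]]                        -- s₁₁

/-- The three-dimensional ground state configuration of the cyclic sawtooth
chain. -/
noncomputable def sawtooth3DState (μ : ZMod 12) : Fin 3 → ℝ :=
  sawtooth3DTable ⟨μ.val, μ.val_lt⟩

set_option maxHeartbeats 1600000 in
/-- The explicit configuration `sawtooth3DState` consists of unit vectors,
spans all of `ℝ³`, and has energy `-18`: it is a three-dimensional ground state
of the cyclic sawtooth chain. -/
theorem sawtooth_three_dimensional_ground_state :
    (∀ μ, ∑ k, sawtooth3DState μ k * sawtooth3DState μ k = 1)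
    ∧ Submodule.span ℝ (Set.range sawtooth3DState) = ⊤
    ∧ sawtoothEnergy sawtooth3DState = -18 := by
  have h3 : Real.sqrt 3 ^ 2 = 3 := Real.sq_sqrt (by norm_num)
  have h3' : Real.sqrt 3 ≠ 0 := by positivity
  have h23 : Real.sqrt (2/3) ^ 2 = 2/3 := Real.sq_sqrt (by norm_num)
  have h23' : Real.sqrt (2/3) ≠ 0 := by positivity
  refine ⟨?_, ?_, ?_⟩
  · -- unit vectors
    have htab : ∀ i : Fin 12, ∑ k, sawtooth3DTable i k * sawtooth3DTable i k = 1 := by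
      simp only [Fin.forall_fin_succ, IsEmpty.forall_iff, and_true, sawtooth3DTable,
        Matrix.cons_val_zero, Matrix.cons_val_succ, Fin.sum_univ_three,
        Matrix.cons_val_one, Matrix.head_cons, Matrix.cons_val_two, Matrix.tail_cons]
      refine ⟨?_,?_,?_,?_,?_,?_,?_,?_,?_,?_,?_,?_⟩ <;>
      · field_simp
        try nlinarith [h3, h23]
    exact fun μ => htab _
  · -- span = ⊤
    have s1 : sawtooth3DState 1 = ![-1/2, 1 / (2 * Real.sqrt 3), Real.sqrt (2/3)] := rfl
    have s2 : sawtooth3DState 2 = ![1, 0, 0] := rfl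
    have s3 : sawtooth3DState 3 = ![-1/2, -(1 / (2 * Real.sqrt 3)), -Real.sqrt (2/3)] := rfl
    have s4 : sawtooth3DState 4 = ![1/2, Real.sqrt 3 / 2, 0] := rfl
    have s5 : sawtooth3DState 5 = ![0, -(1 / Real.sqrt 3), Real.sqrt (2/3)] := rfl
    have s6 : sawtooth3DState 6 = ![-1/2, Real.sqrt 3 / 2, 0] := rfl
    have s7 : sawtooth3DState 7 = ![1/2, -(1 / (2 * Real.sqrt 3)), -Real.sqrt (2/3)] := rfl
    have s8 : sawtooth3DState 8 = ![-1, 0, 0] := rfl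
    have s9 : sawtooth3DState 9 = ![1/2, 1 / (2 * Real.sqrt 3), Real.sqrt (2/3)] := rfl
    have s10 : sawtooth3DState 10 = ![-1/2, -(Real.sqrt 3) / 2, 0] := rfl
    have s11 : sawtooth3DState 11 = ![0, 1 / Real.sqrt 3, -Real.sqrt (2/3)] := rfl
    have s12 : sawtooth3DState 12 = ![1/2, -(Real.sqrt 3) / 2, 0] := rfl
    have s13 : sawtooth3DState 13 = ![-1/2, 1 / (2 * Real.sqrt 3), Real.sqrt (2/3)] := rfl
    set S := Submodule.span ℝ (Set.range sawtooth3DState) with hS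
    have hmem : ∀ μ : ZMod 12, sawtooth3DState μ ∈ S := fun μ => Submodule.subset_span ⟨μ, rfl⟩
    have e0 : (![1,0,0] : Fin 3 → ℝ) ∈ S := s2 ▸ hmem 2
    have e1 : (![0,1,0] : Fin 3 → ℝ) ∈ S := by
      have h := S.smul_mem (Real.sqrt 3)⁻¹ (S.add_mem (hmem 4) (hmem 6))
      have : (![0,1,0] : Fin 3 → ℝ) = (Real.sqrt 3)⁻¹ • (sawtooth3DState 4 + sawtooth3DState 6) := by
        funext k; fin_cases k <;> simp [s4, s6] <;> field_simp <;> norm_num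
      rwa [this]
    have e2 : (![0,0,1] : Fin 3 → ℝ) ∈ S := by
      have h := S.smul_mem (Real.sqrt (2/3))⁻¹
        (S.add_mem (hmem 5) (S.smul_mem ((Real.sqrt 3)⁻¹ * (Real.sqrt 3)⁻¹)
          (S.add_mem (hmem 4) (hmem 6))))
      have : (![0,0,1] : Fin 3 → ℝ) = (Real.sqrt (2/3))⁻¹ •
          (sawtooth3DState 5 + ((Real.sqrt 3)⁻¹ * (Real.sqrt 3)⁻¹) • (sawtooth3DState 4 + sawtooth3DState 6)) := by
        funext k; fin_cases k <;> simp [s4, s5, s6] <;> field_simp <;> norm_num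
      rwa [this]
    rw [eq_top_iff]
    intro x _
    have hx : x = x 0 • (![1,0,0] : Fin 3 → ℝ) + x 1 • ![0,1,0] + x 2 • ![0,0,1] := by
      funext k; fin_cases k <;> simp
    rw [hx]
    exact S.add_mem (S.add_mem (S.smul_mem _ e0) (S.smul_mem _ e1)) (S.smul_mem _ e2)
  · -- energy
    have s1 : sawtooth3DState 1 = ![-1/2, 1 / (2 * Real.sqrt 3), Real.sqrt (2/3)] := rfl
    have s2 : sawtooth3DState 2 = ![1, 0, 0] := rfl
    have s3 : sawtooth3DState 3 = ![-1/2, -(1 / (2 * Real.sqrt 3)), -Real.sqrt (2/3)] := rfl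
    have s4 : sawtooth3DState 4 = ![1/2, Real.sqrt 3 / 2, 0] := rfl
    have s5 : sawtooth3DState 5 = ![0, -(1 / Real.sqrt 3), Real.sqrt (2/3)] := rfl
    have s6 : sawtooth3DState 6 = ![-1/2, Real.sqrt 3 / 2, 0] := rfl
    have s7 : sawtooth3DState 7 = ![1/2, -(1 / (2 * Real.sqrt 3)), -Real.sqrt (2/3)] := rfl
    have s8 : sawtooth3DState 8 = ![-1, 0, 0] := rfl
    have s9 : sawtooth3DState 9 = ![1/2, 1 / (2 * Real.sqrt 3), Real.sqrt (2/3)] := rfl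
    have s10 : sawtooth3DState 10 = ![-1/2, -(Real.sqrt 3) / 2, 0] := rfl
    have s11 : sawtooth3DState 11 = ![0, 1 / Real.sqrt 3, -Real.sqrt (2/3)] := rfl
    have s12 : sawtooth3DState 12 = ![1/2, -(Real.sqrt 3) / 2, 0] := rfl
    have s13 : sawtooth3DState 13 = ![-1/2, 1 / (2 * Real.sqrt 3), Real.sqrt (2/3)] := rfl
    simp only [sawtoothEnergy, Fin.sum_univ_six, Fin.sum_univ_three,
      show ((0:Fin 6):ℕ) = 0 from rfl, show ((1:Fin 6):ℕ) = 1 from rfl,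
      show ((2:Fin 6):ℕ) = 2 from rfl, show ((3:Fin 6):ℕ) = 3 from rfl,
      show ((4:Fin 6):ℕ) = 4 from rfl, show ((5:Fin 6):ℕ) = 5 from rfl]
    norm_num only [s1, s2, s3, s4, s5, s6, s7, s8, s9, s10, s11, s12, s13,
      Matrix.cons_val_zero, Matrix.cons_val_one, Matrix.head_cons,
      Matrix.cons_val_two, Matrix.tail_cons]
    have d1 : 1 / (2 * Real.sqrt 3) = Real.sqrt 3 / 6 := by
      rw [div_eq_div_iff (by positivity) (by norm_num)]; nlinarith [h3]
    have d2 : 1 / Real.sqrt 3 = Real.sqrt 3 / 3 := by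
      rw [div_eq_div_iff (by positivity) (by norm_num)]; nlinarith [h3]
    rw [d1, d2]
    ring_nf
    nlinarith [h3, h23]
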